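/- Let A_1, A_2 be commuting matrices in GL(ρ, Z) defining a totally ergodic Z^2-action by automorphisms of the torus T^ρ (i.e., A^l = A_1^{l_1}A_2^{l_2} has no eigenvalue that is a root of unity for l ≠ 0). Then there exist a joint invariant subspace decomposition of C^ρ and, for each nonzero v ∈ Z^ρ, eigenvalues α_1 of A_1 and α_2 of A_2 with the map (l_1,l_2) ↦ α_1^{l_1}α_2^{l_2} injective on Z^2, and a nonzero scalar v_0, such that for all l, l' ∈ Z^2: if A^l v = A^{l'} v then l = l'. -/

import Mathlib

/-!
Complexify: `A₁, A₂` commute, so they have a common eigenvector `w` with eigenvalues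
`α₁, α₂`, and `A^l w = α^l w`. If `A^l x = A^m x` for some nonzero complex `x`, then `A^(l-m)`
fixes the nonzero vector `A^m x`, so `1` is an eigenvalue of `A^(l-m)`, which total ergodicity
forbids unless `l = m`. Both claims are instances of this: take `x = w`, or `x = v` cast to `ℂ`.
-/

open Matrix

theorem Commute.zpow_mul_zpow_sub_mul {G : Type*} [Group G] {a b : G} (h : Commute a b)
    (l m : ℤ × ℤ) : a ^ (l - m).1 * b ^ (l - m).2 * (a ^ m.1 * b ^ m.2) = a ^ l.1 * b ^ l.2 := by
  rw [(h.zpow_zpow m.1 (l - m).2).symm.mul_mul_mul_comm, ← _root_.zpow_add, ← _root_.zpow_add,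
    Prod.fst_sub, Prod.snd_sub, sub_add_cancel, sub_add_cancel]

theorem Module.End.exists_hasEigenvector_of_commute {K V : Type*} [Field K] [IsAlgClosed K]
    [AddCommGroup V] [Module K V] [FiniteDimensional K V] [Nontrivial V] {f g : Module.End K V}
    (h : Commute f g) : ∃ (α β : K) (v : V), f.HasEigenvector α v ∧ g.HasEigenvector β v := by
  obtain ⟨α, hα⟩ := f.exists_eigenvalue
  have : Nontrivial (f.eigenspace α) :=
    Submodule.nontrivial_iff_ne_bot.2 (Module.End.hasEigenvalue_iff.1 hα)
  obtain ⟨β, hβ⟩ := Module.End.exists_eigenvalue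
    (g.restrict (Module.End.mapsTo_genEigenspace_of_comm h α 1))
  obtain ⟨⟨v, hvα⟩, hvβ⟩ := hβ.exists_hasEigenvector
  refine ⟨α, β, v, ⟨hvα, ?_⟩, ⟨?_, ?_⟩⟩
  · simpa using hvβ.2
  · exact Module.End.mem_eigenspace_iff.2
      (congrArg Subtype.val (Module.End.mem_eigenspace_iff.1 hvβ.1))
  · simpa using hvβ.2

section

variable {n : Type*} [Fintype n] [DecidableEq n]

theorem Matrix.exists_mulVec_eq_smul_of_commute {K : Type*} [Field K] [IsAlgClosed K]
    [Nonempty n] {M N : Matrix n n K} (h : Commute M N) :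
    ∃ (α β : K) (w : n → K), w ≠ 0 ∧ M *ᵥ w = α • w ∧ N *ᵥ w = β • w := by
  obtain ⟨α, β, w, hα, hβ⟩ :=
    Module.End.exists_hasEigenvector_of_commute (h.map (Matrix.toLinAlgEquiv' (R := K)))
  exact ⟨α, β, w, hα.2, Module.End.mem_eigenspace_iff.1 hα.1,
    Module.End.mem_eigenspace_iff.1 hβ.1⟩

theorem Matrix.isRoot_charpoly_of_mulVec_eq_smul {R : Type*} [CommRing R] [IsDomain R]
    {M : Matrix n n R} {μ : R} {w : n → R} (hw : w ≠ 0) (h : M *ᵥ w = μ • w) :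
    M.charpoly.IsRoot μ := by
  rw [← charpoly_toLin', ← Module.End.hasEigenvalue_iff_isRoot_charpoly]
  exact Module.End.hasEigenvalue_of_hasEigenvector
    ⟨Module.End.mem_eigenspace_iff.2 (by simpa using h), hw⟩

namespace Matrix.GeneralLinearGroup

theorem mulVec_ne_zero {R : Type*} [CommRing R] (g : GL n R) {v : n → R} (hv : v ≠ 0) :
    g.val *ᵥ v ≠ 0 :=
  ((mulVec_injective_of_isUnit g.isUnit).ne_iff' (mulVec_zero _)).2 hv

theorem zpow_mulVec_of_mulVec_eq_smul {K : Type*} [Field K] {g : GL n K} {α : K}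
    {w : n → K} (h : g.val *ᵥ w = α • w) (k : ℤ) : (g ^ k).val *ᵥ w = α ^ k • w := by
  rcases eq_or_ne w 0 with rfl | hw
  · simp
  have hα : α ≠ 0 := by
    rintro rfl
    exact g.mulVec_ne_zero hw (by rw [h, zero_smul])
  have hinv : (g⁻¹).val *ᵥ w = α⁻¹ • w := by
    calc (g⁻¹).val *ᵥ w = α⁻¹ • (g⁻¹).val *ᵥ (g.val *ᵥ w) := by
          rw [h, mulVec_smul, inv_smul_smul₀ hα]
      _ = α⁻¹ • w := by
          rw [mulVec_mulVec, ← Units.val_mul, inv_mul_cancel, Units.val_one, one_mulVec]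
  induction k using Int.induction_on with
  | zero => simp
  | succ k ih =>
    rw [_root_.zpow_add_one, Units.val_mul, ← mulVec_mulVec, h, mulVec_smul, ih, smul_smul,
      zpow_add_one₀ hα, mul_comm]
  | pred k ih =>
    rw [_root_.zpow_sub_one, Units.val_mul, ← mulVec_mulVec, hinv, mulVec_smul, ih, smul_smul,
      zpow_sub_one₀ hα, mul_comm]

theorem zpow_mul_zpow_mulVec_of_mulVec_eq_smul {K : Type*} [Field K] {g₁ g₂ : GL n K}
    {α₁ α₂ : K} {w : n → K} (h₁ : g₁.val *ᵥ w = α₁ • w) (h₂ : g₂.val *ᵥ w = α₂ • w)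
    (l : ℤ × ℤ) : (g₁ ^ l.1 * g₂ ^ l.2).val *ᵥ w = (α₁ ^ l.1 * α₂ ^ l.2) • w := by
  rw [Units.val_mul, ← mulVec_mulVec, zpow_mulVec_of_mulVec_eq_smul h₂, mulVec_smul,
    zpow_mulVec_of_mulVec_eq_smul h₁, smul_smul, mul_comm]

theorem map_val_mulVec {R S : Type*} [CommRing R] [CommRing S] (f : R →+* S) (g : GL n R)
    (v : n → R) : (map f g).val *ᵥ (f ∘ v) = f ∘ (g.val *ᵥ v) :=
  funext fun i => (RingHom.map_mulVec f g.val v i).symm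

theorem injective_zpow_mul_zpow_mulVec {R : Type*} [CommRing R] [IsDomain R] {g₁ g₂ : GL n R}
    (hcomm : Commute g₁ g₂)
    (hfree : ∀ l : ℤ × ℤ, l ≠ 0 → ¬ (g₁ ^ l.1 * g₂ ^ l.2).val.charpoly.IsRoot 1)
    {v : n → R} (hv : v ≠ 0) :
    Function.Injective fun l : ℤ × ℤ => (g₁ ^ l.1 * g₂ ^ l.2).val *ᵥ v := by
  intro l m hlm
  by_contra hne
  refine hfree (l - m) (sub_ne_zero.2 hne)
    (isRoot_charpoly_of_mulVec_eq_smul ((g₁ ^ m.1 * g₂ ^ m.2).mulVec_ne_zero hv) ?_)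
  rw [one_smul, mulVec_mulVec, ← Units.val_mul, hcomm.zpow_mul_zpow_sub_mul]
  exact hlm

end Matrix.GeneralLinearGroup

end

/-- For a totally ergodic `ℤ²`-action by commuting toral automorphisms `A₁, A₂ ∈ GL(ρ, ℤ)`
(no eigenvalue of `A^l`, `l ≠ 0`, is a root of unity), for every nonzero `v ∈ ℤ^ρ` there
are eigenvalues `α₁` of `A₁` and `α₂` of `A₂` such that `(l₁,l₂) ↦ α₁^{l₁} α₂^{l₂}` is
injective on `ℤ²`, and the orbit map `l ↦ A^l v` is injective. -/
theorem stmt19 {ρ : ℕ} (A₁ A₂ : GL (Fin ρ) ℤ) (hcomm : A₁ * A₂ = A₂ * A₁)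
    (herg : ∀ l : ℤ × ℤ, l ≠ 0 → ∀ c : ℂ, (∃ m : ℕ, 0 < m ∧ c ^ m = 1) →
      ¬ (((A₁ ^ l.1 * A₂ ^ l.2 : GL (Fin ρ) ℤ) : Matrix (Fin ρ) (Fin ρ) ℤ).map
          (Int.cast : ℤ → ℂ)).charpoly.IsRoot c) :
    ∀ v : Fin ρ → ℤ, v ≠ 0 →
      (∃ α₁ α₂ : ℂ,
        ((A₁ : Matrix (Fin ρ) (Fin ρ) ℤ).map (Int.cast : ℤ → ℂ)).charpoly.IsRoot α₁ ∧
        ((A₂ : Matrix (Fin ρ) (Fin ρ) ℤ).map (Int.cast : ℤ → ℂ)).charpoly.IsRoot α₂ ∧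
        Function.Injective fun l : ℤ × ℤ => α₁ ^ l.1 * α₂ ^ l.2) ∧
      Function.Injective fun l : ℤ × ℤ =>
        ((A₁ ^ l.1 * A₂ ^ l.2 : GL (Fin ρ) ℤ) : Matrix (Fin ρ) (Fin ρ) ℤ).mulVec v := by
  intro v hv
  obtain ⟨i, -⟩ := Function.ne_iff.1 hv
  have : Nonempty (Fin ρ) := ⟨i⟩
  set φ := GeneralLinearGroup.map (n := Fin ρ) (Int.castRingHom ℂ)
  have hφ (l : ℤ × ℤ) : φ A₁ ^ l.1 * φ A₂ ^ l.2 = φ (A₁ ^ l.1 * A₂ ^ l.2) := by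
    rw [map_mul, map_zpow, map_zpow]
  have hcommφ : Commute (φ A₁) (φ A₂) := Commute.map hcomm φ
  have hfree (l : ℤ × ℤ) (hl : l ≠ 0) : ¬ (φ A₁ ^ l.1 * φ A₂ ^ l.2).val.charpoly.IsRoot 1 := by
    rw [hφ]
    exact herg l hl 1 ⟨1, one_pos, one_pow 1⟩
  have horbit {x : Fin ρ → ℂ} (hx : x ≠ 0) :=
    GeneralLinearGroup.injective_zpow_mul_zpow_mulVec hcommφ hfree hx
  obtain ⟨α₁, α₂, w, hw, h₁, h₂⟩ := exists_mulVec_eq_smul_of_commute hcommφ.units_val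
  refine ⟨⟨α₁, α₂, isRoot_charpoly_of_mulVec_eq_smul hw h₁,
    isRoot_charpoly_of_mulVec_eq_smul hw h₂, fun l m hlm => horbit hw ?_⟩,
    fun l m hlm => horbit (x := Int.castRingHom ℂ ∘ v) ?_ ?_⟩
  · dsimp only at hlm ⊢
    rw [GeneralLinearGroup.zpow_mul_zpow_mulVec_of_mulVec_eq_smul h₁ h₂,
      GeneralLinearGroup.zpow_mul_zpow_mulVec_of_mulVec_eq_smul h₁ h₂, hlm]
  · exact fun h => hv (funext fun i => by simpa using congrFun h i)
  · dsimp only at hlm ⊢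
    rw [hφ, hφ, GeneralLinearGroup.map_val_mulVec, GeneralLinearGroup.map_val_mulVec, hlm]
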